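/- Under the orthogonality setting, the null-space projector of the task Jacobian equals the projector built from the null-space basis: I_n − J_x^{#A} J_x = J_ξ^{#A} J_ξ. -/

import Mathlib

open Matrix

/-- The `A`-weighted generalized pseudo-inverse `J^{#A} = A⁻¹ Jᵀ (J A⁻¹ Jᵀ)⁻¹`. -/
noncomputable def weightedPseudoInv {n m : ℕ} (A : Matrix (Fin n) (Fin n) ℝ)
    (J : Matrix (Fin m) (Fin n) ℝ) : Matrix (Fin n) (Fin m) ℝ :=
  A⁻¹ * Jᵀ * (J * A⁻¹ * Jᵀ)⁻¹

/-!
The pseudo-inverses `Px = Jx^{#A}` and `Pξ = Jξ^{#A}` are biorthogonal to `Jx` and `Jξ`: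
`Jx Px = 1`, `Jξ Pξ = 1`, and the mixed products vanish by orthogonality (which is symmetric
because `A⁻¹` is). Stacking, `[Jx; Jξ] [Px Pξ] = 1`; as these blocks are square (`m + r = n`),
also `[Px Pξ] [Jx; Jξ] = Px Jx + Pξ Jξ = 1`.
-/

namespace Matrix

variable {R : Type*} [CommRing R] {m r n : Type*} [Fintype n] [DecidableEq n]

theorem mul_inv_mul_transpose_eq_zero_comm {A : Matrix n n R} (hA : A.IsSymm)
    {J : Matrix m n R} {K : Matrix r n R} (h : J * A⁻¹ * Kᵀ = 0) : K * A⁻¹ * Jᵀ = 0 := by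
  simpa only [transpose_mul, transpose_transpose, hA.inv.eq, Matrix.mul_assoc,
    transpose_zero] using congrArg transpose h

variable [Fintype m] [Fintype r] [DecidableEq m] [DecidableEq r]

theorem add_mul_eq_one_of_biorthogonal (e : n ≃ m ⊕ r) {J₁ : Matrix m n R} {J₂ : Matrix r n R}
    {P₁ : Matrix n m R} {P₂ : Matrix n r R} (h₁₁ : J₁ * P₁ = 1) (h₁₂ : J₁ * P₂ = 0)
    (h₂₁ : J₂ * P₁ = 0) (h₂₂ : J₂ * P₂ = 1) :
    P₁ * J₁ + P₂ * J₂ = 1 := by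
  have hrows : fromRows J₁ J₂ * fromCols P₁ P₂ = 1 := by
    rw [fromRows_mul_fromCols, h₁₁, h₁₂, h₂₁, h₂₂, fromBlocks_one]
  rw [← fromCols_mul_fromRows]
  exact (fromCols_mul_fromRows_eq_one_comm e _ _ _ _).mpr hrows

end Matrix

section WeightedPseudoInv

variable {n m k : ℕ} {A : Matrix (Fin n) (Fin n) ℝ} {J : Matrix (Fin m) (Fin n) ℝ}

theorem mul_weightedPseudoInv (hJ : IsUnit (J * A⁻¹ * Jᵀ)) : J * weightedPseudoInv A J = 1 := by
  rw [weightedPseudoInv, ← Matrix.mul_assoc, ← Matrix.mul_assoc,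
    mul_nonsing_inv _ ((isUnit_iff_isUnit_det _).mp hJ)]

theorem mul_weightedPseudoInv_eq_zero {K : Matrix (Fin k) (Fin n) ℝ} (h : K * A⁻¹ * Jᵀ = 0) :
    K * weightedPseudoInv A J = 0 := by
  rw [weightedPseudoInv, ← Matrix.mul_assoc, ← Matrix.mul_assoc, h, Matrix.zero_mul]

end WeightedPseudoInv

/-- In the orthogonality setting, the null-space projector of the task
Jacobian equals the projector built from the null-space basis:
`I − Jx^{#A} Jx = Jξ^{#A} Jξ`. -/
theorem projector_eq_nullspace_basis_projector {m r : ℕ}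
    (A : Matrix (Fin (m + r)) (Fin (m + r)) ℝ) (hA : A.PosDef)
    (Jx : Matrix (Fin m) (Fin (m + r)) ℝ) (Jξ : Matrix (Fin r) (Fin (m + r)) ℝ)
    (hx : IsUnit (Jx * A⁻¹ * Jxᵀ)) (hξ : IsUnit (Jξ * A⁻¹ * Jξᵀ))
    (horth : Jx * A⁻¹ * Jξᵀ = 0) :
    (1 : Matrix (Fin (m + r)) (Fin (m + r)) ℝ) - weightedPseudoInv A Jx * Jx =
      weightedPseudoInv A Jξ * Jξ := by
  have hsymm : A.IsSymm := isHermitian_iff_isSymm.mp hA.isHermitian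
  have horth' : Jξ * A⁻¹ * Jxᵀ = 0 := mul_inv_mul_transpose_eq_zero_comm hsymm horth
  rw [sub_eq_iff_eq_add', eq_comm]
  exact add_mul_eq_one_of_biorthogonal finSumFinEquiv.symm (mul_weightedPseudoInv hx)
    (mul_weightedPseudoInv_eq_zero horth) (mul_weightedPseudoInv_eq_zero horth')
    (mul_weightedPseudoInv hξ)
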